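/- arXiv:1511.01031 — 3 statements merged into one kernel-verified Lean document; each statement's English description precedes it below -/
import Mathlib

section
/- Let A be a congruence-distributive algebra and θ ∈ Con(A). Then the map FC(θ) : FC(A) → FC(A/θ) defined by FC(θ)(ψ) = (ψ ∨ θ)/θ is well defined and is a morphism of Boolean algebras (it preserves Δ, ∇, joins, meets, and hence complements). -/
/-! Universal-algebra framework: algebras over a signature, congruences,
factor congruences, lifting properties. -/

structure Signature where
  ops : Type
  arity : ops → ℕ

structure Alg (σ : Signature) where
  carrier : Type
  interp : ∀ f : σ.ops, (Fin (σ.arity f) → carrier) → carrier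

namespace Alg

variable {σ : Signature}

/-- A congruence: an equivalence relation compatible with all operations. -/
def IsCon (A : Alg σ) (r : A.carrier → A.carrier → Prop) : Prop :=
  Equivalence r ∧
    ∀ (f : σ.ops) (x y : Fin (σ.arity f) → A.carrier),
      (∀ i, r (x i) (y i)) → r (A.interp f x) (A.interp f y)

/-- The least congruence `Δ_A`. -/
def delta (A : Alg σ) : A.carrier → A.carrier → Prop := fun a b => a = b

/-- The greatest congruence `∇_A = A²`. -/
def nabla (A : Alg σ) : A.carrier → A.carrier → Prop := fun _ _ => True

/-- Meet (intersection) of congruences. -/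
def conMeet (A : Alg σ) (r s : A.carrier → A.carrier → Prop) :
    A.carrier → A.carrier → Prop := fun a b => r a b ∧ s a b

/-- Join of congruences: the least congruence containing both. -/
def conJoin (A : Alg σ) (r s : A.carrier → A.carrier → Prop) :
    A.carrier → A.carrier → Prop := fun a b =>
  ∀ t, A.IsCon t → (∀ x y, r x y → t x y) → (∀ x y, s x y → t x y) → t a b

/-- The congruence generated by a set of pairs. -/
def conGen (A : Alg σ) (X : Set (A.carrier × A.carrier)) :
    A.carrier → A.carrier → Prop := fun a b =>
  ∀ t, A.IsCon t → (∀ p ∈ X, t p.1 p.2) → t a b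

/-- Composition of relations: `(a,b) ∈ comp r s` iff `(a,x) ∈ s` and `(x,b) ∈ r`
for some `x`. -/
def comp (A : Alg σ) (r s : A.carrier → A.carrier → Prop) :
    A.carrier → A.carrier → Prop := fun a b => ∃ x, s a x ∧ r x b

/-- Factor congruences: congruences `φ` having a congruence `φ*` with
`φ ∨ φ* = ∇`, `φ ∩ φ* = Δ` and `φ ∘ φ* = φ* ∘ φ`. -/
def IsFC (A : Alg σ) (φ : A.carrier → A.carrier → Prop) : Prop :=
  A.IsCon φ ∧ ∃ ψ, A.IsCon ψ ∧ A.conJoin φ ψ = A.nabla ∧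
    A.conMeet φ ψ = A.delta ∧ A.comp φ ψ = A.comp ψ φ

/-- Boolean congruences: complemented elements of the lattice `Con(A)`. -/
def IsBooleanCon (A : Alg σ) (φ : A.carrier → A.carrier → Prop) : Prop :=
  A.IsCon φ ∧ ∃ ψ, A.IsCon ψ ∧ A.conJoin φ ψ = A.nabla ∧ A.conMeet φ ψ = A.delta

/-- `A` is congruence-distributive iff the lattice `Con(A)` is distributive. -/
def CongDistrib (A : Alg σ) : Prop :=
  ∀ r s t, A.IsCon r → A.IsCon s → A.IsCon t →
    A.conMeet r (A.conJoin s t) = A.conJoin (A.conMeet r s) (A.conMeet r t)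

/-- `A` is congruence-permutable iff all congruences permute under composition. -/
def CongPermutable (A : Alg σ) : Prop :=
  ∀ r s, A.IsCon r → A.IsCon s → A.comp r s = A.comp s r

/-- Arithmetical = congruence-distributive + congruence-permutable. -/
def Arithmetical (A : Alg σ) : Prop := A.CongDistrib ∧ A.CongPermutable

/-- The quotient algebra `A/θ`. -/
noncomputable def quotAlg (A : Alg σ) (θ : A.carrier → A.carrier → Prop) :
    Alg σ where
  carrier := Quot θ
  interp f x := Quot.mk θ (A.interp f fun i => (x i).out)

/-- The image `α/θ = {(a/θ, b/θ) : (a,b) ∈ α}` of a relation in the quotient. -/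
def quotRel (A : Alg σ) (θ α : A.carrier → A.carrier → Prop) :
    Quot θ → Quot θ → Prop := fun x y =>
  ∃ a b, x = Quot.mk θ a ∧ y = Quot.mk θ b ∧ α a b

/-- `θ` has the Factor Congruence Lifting Property: the Boolean morphism
`FC(θ) : FC(A) → FC(A/θ)`, `ψ ↦ (ψ ∨ θ)/θ`, is surjective. -/
def HasFCLP (A : Alg σ) (θ : A.carrier → A.carrier → Prop) : Prop :=
  ∀ γ, (A.quotAlg θ).IsFC γ →
    ∃ ψ, A.IsFC ψ ∧ A.quotRel θ (A.conJoin ψ θ) = γ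

/-- `θ` has the Congruence Boolean Lifting Property: the Boolean morphism
`B(Con(A)) → B(Con(A/θ))`, `ψ ↦ (ψ ∨ θ)/θ`, is surjective. -/
def HasCBLP (A : Alg σ) (θ : A.carrier → A.carrier → Prop) : Prop :=
  ∀ γ, (A.quotAlg θ).IsBooleanCon γ →
    ∃ ψ, A.IsBooleanCon ψ ∧ A.quotRel θ (A.conJoin ψ θ) = γ

/-- `A` has FCLP iff every congruence of `A` has FCLP. -/
def AlgFCLP (A : Alg σ) : Prop := ∀ θ, A.IsCon θ → A.HasFCLP θ

/-- `A` has CBLP iff every congruence of `A` has CBLP. -/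
def AlgCBLP (A : Alg σ) : Prop := ∀ θ, A.IsCon θ → A.HasCBLP θ

/-- FC-normality. -/
def FCNormal (A : Alg σ) : Prop :=
  ∀ φ ψ, A.IsCon φ → A.IsCon ψ → A.comp φ ψ = A.nabla →
    ∃ α β, A.IsFC α ∧ A.IsFC β ∧ A.conMeet α β = A.delta ∧
      A.comp φ α = A.nabla ∧ A.comp ψ β = A.nabla

/-- B-normality. -/
def BNormal (A : Alg σ) : Prop :=
  ∀ φ ψ, A.IsCon φ → A.IsCon ψ → A.conJoin φ ψ = A.nabla →
    ∃ α β, A.IsBooleanCon α ∧ A.IsBooleanCon β ∧ A.conMeet α β = A.delta ∧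
      A.conJoin φ α = A.nabla ∧ A.conJoin ψ β = A.nabla

/-- Isomorphism of algebras. -/
def Iso (A B : Alg σ) : Prop :=
  ∃ e : A.carrier ≃ B.carrier,
    ∀ (f : σ.ops) (x : Fin (σ.arity f) → A.carrier),
      e (A.interp f x) = B.interp f fun i => e (x i)

/-- Direct product of a finite family of algebras. -/
def prodAlg {n : ℕ} (B : Fin n → Alg σ) : Alg σ where
  carrier := ∀ i, (B i).carrier
  interp f x := fun i => (B i).interp f fun j => x j i

/-- The product congruence `θ₁ × … × θₙ`. -/
def prodRel {n : ℕ} (B : Fin n → Alg σ)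
    (θ : ∀ i, (B i).carrier → (B i).carrier → Prop) :
    (prodAlg B).carrier → (prodAlg B).carrier → Prop :=
  fun x y => ∀ i, θ i (x i) (y i)

/-- Maximal congruences: maximal elements of `(Con(A) \ {∇}, ⊆)`. -/
def IsMaxCon (A : Alg σ) (θ : A.carrier → A.carrier → Prop) : Prop :=
  A.IsCon θ ∧ θ ≠ A.nabla ∧
    ∀ ψ, A.IsCon ψ → ψ ≠ A.nabla → (∀ a b, θ a b → ψ a b) → ψ = θ

/-- Prime congruences. -/
def IsPrimeCon (A : Alg σ) (θ : A.carrier → A.carrier → Prop) : Prop :=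
  A.IsCon θ ∧ ∀ α β, A.IsCon α → A.IsCon β →
    (∀ a b, α a b → β a b → θ a b) →
    (∀ a b, α a b → θ a b) ∨ ∀ a b, β a b → θ a b

end Alg

/-! On the interval `[θ, ∇]` of `Con(A)`, the map `α ↦ α/θ` into `Con(A/θ)` commutes with
joins and meets. Hence `ψ ↦ (ψ ∨ θ)/θ` preserves `Δ`, `∇` and joins,
and it preserves meets because, by distributivity, `ψ ↦ ψ ∨ θ` does. A factor congruence `ψ`
with complement `ψ*` satisfies `ψ ∘ ψ* = ψ* ∘ ψ = ∇`, since permuting congruences compose to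
their join; this survives passing to `A/θ`, so `(ψ* ∨ θ)/θ` witnesses that `(ψ ∨ θ)/θ` is a
factor congruence. -/

namespace Alg

variable {σ : Signature} {A : Alg σ} {θ ψ χ α β : A.carrier → A.carrier → Prop}

theorem mk_eq_mk_iff (hθ : A.IsCon θ) {a b : A.carrier} :
    Quot.mk θ a = Quot.mk θ b ↔ θ a b :=
  ⟨fun h => hθ.1.eqvGen_iff.mp (Quot.eqvGen_exact h), Quot.sound⟩

theorem le_conJoin_left : ∀ a b, α a b → A.conJoin α β a b :=
  fun a b h _ _ hα _ => hα a b h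

theorem le_conJoin_right : ∀ a b, β a b → A.conJoin α β a b :=
  fun a b h _ _ _ hβ => hβ a b h

theorem conJoin_le {t : A.carrier → A.carrier → Prop} (ht : A.IsCon t)
    (hα : ∀ a b, α a b → t a b) (hβ : ∀ a b, β a b → t a b) :
    ∀ a b, A.conJoin α β a b → t a b :=
  fun _ _ h => h t ht hα hβ

theorem isCon_conJoin : A.IsCon (A.conJoin α β) := by
  refine ⟨⟨?_, ?_, ?_⟩, ?_⟩
  · exact fun a t ht _ _ => ht.1.refl a
  · exact fun h t ht hα hβ => ht.1.symm (h t ht hα hβ)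
  · exact fun hab hbc t ht hα hβ => ht.1.trans (hab t ht hα hβ) (hbc t ht hα hβ)
  · exact fun f x y h t ht hα hβ => ht.2 f x y fun i => h i t ht hα hβ

theorem isCon_conMeet (hα : A.IsCon α) (hβ : A.IsCon β) : A.IsCon (A.conMeet α β) := by
  refine ⟨⟨?_, ?_, ?_⟩, ?_⟩
  · exact fun a => ⟨hα.1.refl a, hβ.1.refl a⟩
  · exact fun h => ⟨hα.1.symm h.1, hβ.1.symm h.2⟩
  · exact fun h h' => ⟨hα.1.trans h.1 h'.1, hβ.1.trans h.2 h'.2⟩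
  · exact fun f x y h => ⟨hα.2 f x y fun i => (h i).1, hβ.2 f x y fun i => (h i).2⟩

theorem conJoin_delta_left (hθ : A.IsCon θ) : A.conJoin A.delta θ = θ :=
  le_antisymm (conJoin_le hθ (fun a _ h => h ▸ hθ.1.refl a) fun _ _ h => h) le_conJoin_right

theorem conJoin_nabla_left : A.conJoin A.nabla θ = A.nabla :=
  le_antisymm (fun _ _ _ => trivial) fun a b _ => le_conJoin_left a b trivial

theorem conJoin_conJoin_right :
    A.conJoin (A.conJoin ψ χ) θ = A.conJoin (A.conJoin ψ θ) (A.conJoin χ θ) := by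
  apply le_antisymm
  · refine conJoin_le isCon_conJoin (conJoin_le isCon_conJoin ?_ ?_) ?_
    · exact fun a b h => le_conJoin_left a b (le_conJoin_left a b h)
    · exact fun a b h => le_conJoin_right a b (le_conJoin_left a b h)
    · exact fun a b h => le_conJoin_left a b (le_conJoin_right a b h)
  · refine conJoin_le isCon_conJoin (conJoin_le isCon_conJoin ?_ ?_)
      (conJoin_le isCon_conJoin ?_ ?_)
    · exact fun a b h => le_conJoin_left a b (le_conJoin_left a b h)
    · exact le_conJoin_right
    · exact fun a b h => le_conJoin_left a b (le_conJoin_right a b h)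
    · exact le_conJoin_right

theorem conJoin_conMeet_right (hcd : A.CongDistrib) (hψ : A.IsCon ψ) (hχ : A.IsCon χ)
    (hθ : A.IsCon θ) :
    A.conJoin (A.conMeet ψ χ) θ = A.conMeet (A.conJoin ψ θ) (A.conJoin χ θ) := by
  apply le_antisymm
  · exact conJoin_le (isCon_conMeet isCon_conJoin isCon_conJoin)
      (fun a b h => ⟨le_conJoin_left a b h.1, le_conJoin_left a b h.2⟩)
      fun a b h => ⟨le_conJoin_right a b h, le_conJoin_right a b h⟩
  · -- `(ψ ∨ θ) ∧ (χ ∨ θ) = ((ψ ∨ θ) ∧ χ) ∨ ((ψ ∨ θ) ∧ θ)` and `χ ∧ (ψ ∨ θ) = (χ ∧ ψ) ∨ (χ ∧ θ)`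
    rw [hcd _ χ θ isCon_conJoin hχ hθ]
    refine conJoin_le isCon_conJoin ?_ fun a b h => le_conJoin_right a b h.2
    intro a b h
    have h' : A.conMeet χ (A.conJoin ψ θ) a b := ⟨h.2, h.1⟩
    rw [hcd χ ψ θ hχ hψ hθ] at h'
    exact conJoin_le isCon_conJoin (fun c d h => le_conJoin_left c d ⟨h.2, h.1⟩)
      (fun c d h => le_conJoin_right c d h.2) a b h'

theorem quotAlg_interp_mk (hθ : A.IsCon θ) (f : σ.ops) (x : Fin (σ.arity f) → A.carrier) :
    (A.quotAlg θ).interp f (fun i => Quot.mk θ (x i)) = Quot.mk θ (A.interp f x) :=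
  Quot.sound <| hθ.2 f _ _ fun _ => (mk_eq_mk_iff hθ).mp (Quot.out_eq _)

theorem quotRel_mk_mk_iff (hθ : A.IsCon θ) (hα : A.IsCon α) (hθα : ∀ a b, θ a b → α a b)
    {a b : A.carrier} : A.quotRel θ α (Quot.mk θ a) (Quot.mk θ b) ↔ α a b := by
  refine ⟨?_, fun h => ⟨a, b, rfl, rfl, h⟩⟩
  rintro ⟨a', b', ha, hb, hab⟩
  exact hα.1.trans (hθα _ _ ((mk_eq_mk_iff hθ).mp ha))
    (hα.1.trans hab (hα.1.symm (hθα _ _ ((mk_eq_mk_iff hθ).mp hb))))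

theorem quotRel_iff_out (hθ : A.IsCon θ) (hα : A.IsCon α) (hθα : ∀ a b, θ a b → α a b)
    {x y : Quot θ} : A.quotRel θ α x y ↔ α x.out y.out := by
  conv_lhs => rw [← Quot.out_eq x, ← Quot.out_eq y]
  exact quotRel_mk_mk_iff hθ hα hθα

theorem isCon_quotRel (hθ : A.IsCon θ) (hα : A.IsCon α) (hθα : ∀ a b, θ a b → α a b) :
    (A.quotAlg θ).IsCon (A.quotRel θ α) := by
  have hout {x y : Quot θ} := quotRel_iff_out (x := x) (y := y) hθ hα hθα
  refine ⟨⟨fun x => hout.mpr (hα.1.refl _), fun h => hout.mpr (hα.1.symm (hout.mp h)),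
    fun h h' => hout.mpr (hα.1.trans (hout.mp h) (hout.mp h'))⟩, ?_⟩
  exact fun f x y h => ⟨_, _, rfl, rfl, hα.2 f _ _ fun i => hout.mp (h i)⟩

theorem quotRel_self (hθ : A.IsCon θ) : A.quotRel θ θ = (A.quotAlg θ).delta := by
  apply le_antisymm
  · rintro x y ⟨a, b, rfl, rfl, hab⟩
    exact Quot.sound hab
  · rintro x y (rfl : x = y)
    exact ⟨x.out, x.out, (Quot.out_eq x).symm, (Quot.out_eq x).symm, hθ.1.refl _⟩

theorem quotRel_nabla : A.quotRel θ A.nabla = (A.quotAlg θ).nabla :=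
  le_antisymm (fun _ _ _ => trivial)
    fun x y _ => ⟨x.out, y.out, (Quot.out_eq x).symm, (Quot.out_eq y).symm, trivial⟩

theorem quotRel_conJoin (hθ : A.IsCon θ) (hθα : ∀ a b, θ a b → α a b) :
    A.quotRel θ (A.conJoin α β) =
      (A.quotAlg θ).conJoin (A.quotRel θ α) (A.quotRel θ β) := by
  apply le_antisymm
  · rintro _ _ ⟨a, b, rfl, rfl, hab⟩ t ht hα hβ
    -- the preimage of `t` in `A` is a congruence containing `α` and `β`
    have ht' : A.IsCon fun c d => t (Quot.mk θ c) (Quot.mk θ d) := by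
      refine ⟨⟨fun _ => ht.1.refl _, ht.1.symm, ht.1.trans⟩, fun f u v h => ?_⟩
      have := ht.2 f (fun i => Quot.mk θ (u i)) (fun i => Quot.mk θ (v i)) h
      rwa [quotAlg_interp_mk hθ, quotAlg_interp_mk hθ] at this
    exact hab _ ht' (fun c d h => hα _ _ ⟨c, d, rfl, rfl, h⟩)
      fun c d h => hβ _ _ ⟨c, d, rfl, rfl, h⟩
  · refine conJoin_le (isCon_quotRel hθ isCon_conJoin
      fun a b h => le_conJoin_left a b (hθα a b h)) ?_ ?_
    · rintro _ _ ⟨a, b, ha, hb, hab⟩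
      exact ⟨a, b, ha, hb, le_conJoin_left a b hab⟩
    · rintro _ _ ⟨a, b, ha, hb, hab⟩
      exact ⟨a, b, ha, hb, le_conJoin_right a b hab⟩

theorem quotRel_conMeet (hθ : A.IsCon θ) (hα : A.IsCon α) (hβ : A.IsCon β)
    (hθα : ∀ a b, θ a b → α a b) (hθβ : ∀ a b, θ a b → β a b) :
    A.quotRel θ (A.conMeet α β) =
      (A.quotAlg θ).conMeet (A.quotRel θ α) (A.quotRel θ β) := by
  apply le_antisymm
  · rintro x y ⟨a, b, ha, hb, hαab, hβab⟩
    exact ⟨⟨a, b, ha, hb, hαab⟩, ⟨a, b, ha, hb, hβab⟩⟩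
  · rintro x y ⟨hαxy, hβxy⟩
    exact ⟨x.out, y.out, (Quot.out_eq x).symm, (Quot.out_eq y).symm,
      (quotRel_iff_out hθ hα hθα).mp hαxy, (quotRel_iff_out hθ hβ hθβ).mp hβxy⟩

theorem quotRel_comp_eq_nabla (h : A.comp ψ χ = A.nabla) :
    (A.quotAlg θ).comp (A.quotRel θ (A.conJoin ψ θ)) (A.quotRel θ (A.conJoin χ θ)) =
      (A.quotAlg θ).nabla := by
  refine le_antisymm (fun _ _ _ => trivial) fun x y _ => ?_
  obtain ⟨z, hxz, hzy⟩ : A.comp ψ χ x.out y.out := h ▸ trivial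
  exact ⟨Quot.mk θ z, ⟨x.out, z, (Quot.out_eq x).symm, rfl, le_conJoin_left _ _ hxz⟩,
    ⟨z, y.out, rfl, (Quot.out_eq y).symm, le_conJoin_left _ _ hzy⟩⟩

theorem quotRel_conJoin_conJoin (hθ : A.IsCon θ) :
    A.quotRel θ (A.conJoin (A.conJoin ψ χ) θ) =
      (A.quotAlg θ).conJoin (A.quotRel θ (A.conJoin ψ θ)) (A.quotRel θ (A.conJoin χ θ)) := by
  rw [conJoin_conJoin_right, quotRel_conJoin hθ le_conJoin_right]

theorem quotRel_conJoin_conMeet (hcd : A.CongDistrib) (hθ : A.IsCon θ) (hψ : A.IsCon ψ)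
    (hχ : A.IsCon χ) :
    A.quotRel θ (A.conJoin (A.conMeet ψ χ) θ) =
      (A.quotAlg θ).conMeet (A.quotRel θ (A.conJoin ψ θ)) (A.quotRel θ (A.conJoin χ θ)) := by
  rw [conJoin_conMeet_right hcd hψ hχ hθ,
    quotRel_conMeet hθ isCon_conJoin isCon_conJoin le_conJoin_right le_conJoin_right]

theorem isCon_comp_of_comp_comm (hψ : A.IsCon ψ) (hχ : A.IsCon χ)
    (hcomm : A.comp ψ χ = A.comp χ ψ) : A.IsCon (A.comp ψ χ) := by
  refine ⟨⟨fun a => ⟨a, hχ.1.refl a, hψ.1.refl a⟩, ?_, ?_⟩, ?_⟩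
  · rintro a b ⟨x, hax, hxb⟩
    exact hcomm ▸ ⟨x, hψ.1.symm hxb, hχ.1.symm hax⟩
  · rintro a b c ⟨x, hax, hxb⟩ ⟨y, hby, hyc⟩
    obtain ⟨z, hxz, hzy⟩ : A.comp ψ χ x y := hcomm ▸ ⟨b, hxb, hby⟩
    exact ⟨z, hχ.1.trans hax hxz, hψ.1.trans hzy hyc⟩
  · intro f x y h
    choose w hxw hwy using h
    exact ⟨A.interp f w, hχ.2 f x w hxw, hψ.2 f w y hwy⟩

theorem comp_eq_nabla_of_conJoin_eq_nabla (hψ : A.IsCon ψ) (hχ : A.IsCon χ)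
    (hcomm : A.comp ψ χ = A.comp χ ψ) (hjoin : A.conJoin ψ χ = A.nabla) :
    A.comp ψ χ = A.nabla := by
  refine le_antisymm (fun _ _ _ => trivial) fun a b _ => ?_
  have hab : A.conJoin ψ χ a b := hjoin ▸ trivial
  exact hab _ (isCon_comp_of_comp_comm hψ hχ hcomm) (fun c d h => ⟨c, hχ.1.refl c, h⟩)
    fun c d h => ⟨d, h, hψ.1.refl d⟩

theorem isFC_quotRel_conJoin (hcd : A.CongDistrib) (hθ : A.IsCon θ) (hψ : A.IsFC ψ) :
    (A.quotAlg θ).IsFC (A.quotRel θ (A.conJoin ψ θ)) := by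
  obtain ⟨hψ, ψ', hψ', hjoin, hmeet, hcomm⟩ := hψ
  have hcomp := comp_eq_nabla_of_conJoin_eq_nabla hψ hψ' hcomm hjoin
  refine ⟨isCon_quotRel hθ isCon_conJoin le_conJoin_right, A.quotRel θ (A.conJoin ψ' θ),
    isCon_quotRel hθ isCon_conJoin le_conJoin_right, ?_, ?_, ?_⟩
  · rw [← quotRel_conJoin_conJoin hθ, hjoin, conJoin_nabla_left, quotRel_nabla]
  · rw [← quotRel_conJoin_conMeet hcd hθ hψ hψ', hmeet, conJoin_delta_left hθ, quotRel_self hθ]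
  · rw [quotRel_comp_eq_nabla hcomp, quotRel_comp_eq_nabla (hcomm ▸ hcomp)]

end Alg

theorem stmt_2_general {σ : Signature} (A : Alg σ)
    (hcd : A.CongDistrib) (θ : A.carrier → A.carrier → Prop)
    (hθ : A.IsCon θ) :
    (∀ ψ, A.IsFC ψ → (A.quotAlg θ).IsFC (A.quotRel θ (A.conJoin ψ θ))) ∧
    A.quotRel θ (A.conJoin A.delta θ) = (A.quotAlg θ).delta ∧
    A.quotRel θ (A.conJoin A.nabla θ) = (A.quotAlg θ).nabla ∧
    (∀ ψ χ, A.IsFC ψ → A.IsFC χ →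
      A.quotRel θ (A.conJoin (A.conJoin ψ χ) θ) =
        (A.quotAlg θ).conJoin (A.quotRel θ (A.conJoin ψ θ))
          (A.quotRel θ (A.conJoin χ θ))) ∧
    (∀ ψ χ, A.IsFC ψ → A.IsFC χ →
      A.quotRel θ (A.conJoin (A.conMeet ψ χ) θ) =
        (A.quotAlg θ).conMeet (A.quotRel θ (A.conJoin ψ θ))
          (A.quotRel θ (A.conJoin χ θ))) :=
  ⟨fun _ hψ => Alg.isFC_quotRel_conJoin hcd hθ hψ,
    by rw [Alg.conJoin_delta_left hθ, Alg.quotRel_self hθ],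
    by rw [Alg.conJoin_nabla_left, Alg.quotRel_nabla],
    fun _ _ _ _ => Alg.quotRel_conJoin_conJoin hθ,
    fun _ _ hψ hχ => Alg.quotRel_conJoin_conMeet hcd hθ hψ.1 hχ.1⟩

/-- `FC(θ) : FC(A) → FC(A/θ)`, `ψ ↦ (ψ ∨ θ)/θ`, is well defined and is a
morphism of Boolean algebras: it preserves `Δ`, `∇`, joins and meets. -/
theorem stmt_2 {σ : Signature} (A : Alg σ) (hne : Nonempty A.carrier)
    (hcd : A.CongDistrib) (θ : A.carrier → A.carrier → Prop)
    (hθ : A.IsCon θ) :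
    (∀ ψ, A.IsFC ψ → (A.quotAlg θ).IsFC (A.quotRel θ (A.conJoin ψ θ))) ∧
    A.quotRel θ (A.conJoin A.delta θ) = (A.quotAlg θ).delta ∧
    A.quotRel θ (A.conJoin A.nabla θ) = (A.quotAlg θ).nabla ∧
    (∀ ψ χ, A.IsFC ψ → A.IsFC χ →
      A.quotRel θ (A.conJoin (A.conJoin ψ χ) θ) =
        (A.quotAlg θ).conJoin (A.quotRel θ (A.conJoin ψ θ))
          (A.quotRel θ (A.conJoin χ θ))) ∧
    (∀ ψ χ, A.IsFC ψ → A.IsFC χ →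
      A.quotRel θ (A.conJoin (A.conMeet ψ χ) θ) =
        (A.quotAlg θ).conMeet (A.quotRel θ (A.conJoin ψ θ))
          (A.quotRel θ (A.conJoin χ θ))) :=
  stmt_2_general A hcd θ hθ
end

section
/- Let A be a congruence-distributive algebra. Then A has the FCLP if and only if for every congruence φ ∈ Con(A), the quotient algebra A/φ has the FCLP. -/
namespace Alg

variable {σ : Signature}

def IsHom (A B : Alg σ) (e : A.carrier → B.carrier) : Prop :=
  ∀ (f : σ.ops) (x : Fin (σ.arity f) → A.carrier),
    e (A.interp f x) = B.interp f fun i => e (x i)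

theorem mk_eq_iff {α : Type} {θ : α → α → Prop} (hθ : Equivalence θ)
    {a b : α} : Quot.mk θ a = Quot.mk θ b ↔ θ a b := by
  rw [Quot.eq]
  exact ⟨fun h => (Equivalence.eqvGen_iff hθ).mp h, fun h => Relation.EqvGen.rel _ _ h⟩

theorem quot_mk_interp {A : Alg σ} {θ} (hθ : A.IsCon θ) (f : σ.ops)
    (a : Fin (σ.arity f) → A.carrier) :
    (A.quotAlg θ).interp f (fun i => Quot.mk θ (a i)) = Quot.mk θ (A.interp f a) := by
  show Quot.mk θ (A.interp f fun i => (Quot.mk θ (a i)).out) = _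
  exact Quot.sound (hθ.2 f _ _ fun i => (mk_eq_iff hθ.1).mp (Quot.out_eq _))

theorem mk_isHom {A : Alg σ} {θ} (hθ : A.IsCon θ) :
    IsHom A (A.quotAlg θ) (Quot.mk θ) :=
  fun f x => (quot_mk_interp hθ f x).symm

theorem mk_surjective {A : Alg σ} (θ : A.carrier → A.carrier → Prop) :
    Function.Surjective (Quot.mk θ) := fun q => ⟨q.out, Quot.out_eq q⟩

theorem delta_isCon (A : Alg σ) : A.IsCon A.delta :=
  ⟨⟨fun _ => rfl, fun h => h.symm, fun h h' => h.trans h'⟩,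
   fun f _ _ h => congrArg (A.interp f) (funext h)⟩

theorem le_conJoin_left_s4 {A : Alg σ} {r s : A.carrier → A.carrier → Prop}
    {a b} (h : r a b) : A.conJoin r s a b := fun _ _ hr _ => hr a b h

theorem le_conJoin_right_s4 {A : Alg σ} {r s : A.carrier → A.carrier → Prop}
    {a b} (h : s a b) : A.conJoin r s a b := fun _ _ _ hs => hs a b h

theorem conJoin_le_s4 {A : Alg σ} {r s t : A.carrier → A.carrier → Prop}
    (ht : A.IsCon t) (hr : ∀ a b, r a b → t a b) (hs : ∀ a b, s a b → t a b)
    {a b} (h : A.conJoin r s a b) : t a b := h t ht hr hs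

theorem conJoin_isCon {A : Alg σ} (r s : A.carrier → A.carrier → Prop) :
    A.IsCon (A.conJoin r s) := by
  refine ⟨⟨fun a t ht _ _ => ht.1.refl a,
    fun h t ht h1 h2 => ht.1.symm (h t ht h1 h2),
    fun h h' t ht h1 h2 => ht.1.trans (h t ht h1 h2) (h' t ht h1 h2)⟩,
    fun f x y h t ht h1 h2 => ht.2 f x y fun i => h i t ht h1 h2⟩

theorem conMeet_isCon {A : Alg σ} {r s : A.carrier → A.carrier → Prop}
    (hr : A.IsCon r) (hs : A.IsCon s) : A.IsCon (A.conMeet r s) :=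
  ⟨⟨fun a => ⟨hr.1.refl a, hs.1.refl a⟩,
    fun h => ⟨hr.1.symm h.1, hs.1.symm h.2⟩,
    fun h h' => ⟨hr.1.trans h.1 h'.1, hs.1.trans h.2 h'.2⟩⟩,
   fun f x y h => ⟨hr.2 f x y fun i => (h i).1, hs.2 f x y fun i => (h i).2⟩⟩

theorem pull_isCon {A B : Alg σ} {e : A.carrier → B.carrier} (he : IsHom A B e)
    {r} (hr : B.IsCon r) : A.IsCon (fun a b => r (e a) (e b)) := by
  refine ⟨⟨fun a => hr.1.refl _, fun h => hr.1.symm h, fun h h' => hr.1.trans h h'⟩,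
    fun f x y h => ?_⟩
  show r (e (A.interp f x)) (e (A.interp f y))
  rw [he f x, he f y]
  exact hr.2 f _ _ h

theorem comp_isCon {A : Alg σ} {φ ψ} (hφ : A.IsCon φ) (hψ : A.IsCon ψ)
    (hp : A.comp φ ψ = A.comp ψ φ) : A.IsCon (A.comp φ ψ) := by
  constructor
  · constructor
    · exact fun a => ⟨a, hψ.1.refl a, hφ.1.refl a⟩
    · rintro a b ⟨x, h1, h2⟩
      have : A.comp ψ φ b a := ⟨x, hφ.1.symm h2, hψ.1.symm h1⟩
      rw [← hp] at this; exact this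
    · rintro a b c ⟨x, h1, h2⟩ ⟨y, h3, h4⟩
      have hxy : A.comp ψ φ x y := ⟨b, h2, h3⟩
      rw [← hp] at hxy
      obtain ⟨z, h5, h6⟩ := hxy
      exact ⟨z, hψ.1.trans h1 h5, hφ.1.trans h6 h4⟩
  · intro f x y h
    refine ⟨A.interp f fun i => (h i).choose, ?_, ?_⟩
    · exact hψ.2 f _ _ fun i => (h i).choose_spec.1
    · exact hφ.2 f _ _ fun i => (h i).choose_spec.2

theorem comp_eq_nabla {A : Alg σ} {φ ψ} (hφ : A.IsCon φ) (hψ : A.IsCon ψ)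
    (hj : A.conJoin φ ψ = A.nabla) (hp : A.comp φ ψ = A.comp ψ φ) :
    A.comp φ ψ = A.nabla := by
  funext a b
  apply propext
  refine ⟨fun _ => trivial, fun _ => ?_⟩
  have h : A.conJoin φ ψ a b := by rw [hj]; trivial
  exact conJoin_le_s4 (comp_isCon hφ hψ hp)
    (fun a b h => ⟨a, hψ.1.refl a, h⟩) (fun a b h => ⟨b, h, hφ.1.refl b⟩) h

theorem quotRel_mk_iff {A : Alg σ} {θ α : A.carrier → A.carrier → Prop}
    (hθ : Equivalence θ) (hα : Equivalence α)
    (hle : ∀ a b, θ a b → α a b) {a b} :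
    A.quotRel θ α (Quot.mk θ a) (Quot.mk θ b) ↔ α a b := by
  constructor
  · rintro ⟨a', b', ha, hb, h⟩
    exact hα.trans (hα.trans (hle _ _ ((mk_eq_iff hθ).mp ha)) h)
      (hα.symm (hle _ _ ((mk_eq_iff hθ).mp hb)))
  · exact fun h => ⟨a, b, rfl, rfl, h⟩

def push {A B : Alg σ} (e : A.carrier → B.carrier)
    (r : A.carrier → A.carrier → Prop) : B.carrier → B.carrier → Prop :=
  fun x y => ∃ a b, x = e a ∧ y = e b ∧ r a b

theorem push_iff {A B : Alg σ} {e : A.carrier → B.carrier}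
    {r} (hr : Equivalence r) (hκ : ∀ a b, e a = e b → r a b)
    {a b} : push e r (e a) (e b) ↔ r a b := by
  constructor
  · rintro ⟨a', b', ha, hb, h⟩
    exact hr.trans (hr.trans (hκ _ _ ha) h) (hr.symm (hκ _ _ hb))
  · exact fun h => ⟨a, b, rfl, rfl, h⟩

theorem push_isCon {A B : Alg σ} {e : A.carrier → B.carrier} (he : IsHom A B e)
    (hs : Function.Surjective e) {r} (hr : A.IsCon r)
    (hκ : ∀ a b, e a = e b → r a b) : B.IsCon (push e r) := by
  constructor
  · constructor
    · intro x
      obtain ⟨a, rfl⟩ := hs x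
      exact ⟨a, a, rfl, rfl, hr.1.refl a⟩
    · rintro x y ⟨a, b, rfl, rfl, h⟩
      exact ⟨b, a, rfl, rfl, hr.1.symm h⟩
    · rintro x y z ⟨a, b, rfl, rfl, h⟩ h2
      obtain ⟨b', c, hb, rfl, h'⟩ := h2
      exact ⟨a, c, rfl, rfl, hr.1.trans (hr.1.trans h (hκ _ _ hb)) h'⟩
  · intro f x y h
    choose a b hx hy hab using h
    have hx' : x = fun i => e (a i) := funext hx
    have hy' : y = fun i => e (b i) := funext hy
    subst hx' hy'
    exact ⟨A.interp f a, A.interp f b, (he f a).symm, (he f b).symm, hr.2 f a b hab⟩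

theorem push_conJoin {A B : Alg σ} {e : A.carrier → B.carrier} (he : IsHom A B e)
    (hs : Function.Surjective e) {r s} (hr : A.IsCon r) (hsc : A.IsCon s)
    (hκr : ∀ a b, e a = e b → r a b) (hκs : ∀ a b, e a = e b → s a b) :
    push e (A.conJoin r s) = B.conJoin (push e r) (push e s) := by
  funext x y
  apply propext
  constructor
  · rintro ⟨a, b, rfl, rfl, h⟩
    intro t ht h1 h2
    exact h (fun a b => t (e a) (e b)) (pull_isCon he ht)
      (fun a b hab => h1 _ _ ⟨a, b, rfl, rfl, hab⟩)
      (fun a b hab => h2 _ _ ⟨a, b, rfl, rfl, hab⟩)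
  · intro h
    refine h (push e (A.conJoin r s))
      (push_isCon he hs (conJoin_isCon r s) fun a b hab => le_conJoin_left_s4 (hκr a b hab))
      ?_ ?_
    · rintro x y ⟨a, b, hx, hy, hab⟩
      exact ⟨a, b, hx, hy, le_conJoin_left_s4 hab⟩
    · rintro x y ⟨a, b, hx, hy, hab⟩
      exact ⟨a, b, hx, hy, le_conJoin_right_s4 hab⟩

theorem pull_conJoin_iff {A B : Alg σ} {e : A.carrier → B.carrier} (he : IsHom A B e)
    (hsurj : Function.Surjective e) {s t} (hs : B.IsCon s) (ht : B.IsCon t)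
    {a b : A.carrier} :
    B.conJoin s t (e a) (e b) ↔
      A.conJoin (fun a b => s (e a) (e b)) (fun a b => t (e a) (e b)) a b := by
  constructor
  · intro h
    have hκ1 : ∀ a b : A.carrier, e a = e b →
        A.conJoin (fun a b => s (e a) (e b)) (fun a b => t (e a) (e b)) a b :=
      fun a b hab => le_conJoin_left_s4 (hab ▸ hs.1.refl (e a))
    have hu : B.IsCon (push e (A.conJoin (fun a b => s (e a) (e b))
        (fun a b => t (e a) (e b)))) :=
      push_isCon he hsurj (conJoin_isCon _ _) hκ1
    have h2 := h _ hu
      (fun x y hxy => by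
        obtain ⟨a', rfl⟩ := hsurj x
        obtain ⟨b', rfl⟩ := hsurj y
        exact ⟨a', b', rfl, rfl, le_conJoin_left_s4 hxy⟩)
      (fun x y hxy => by
        obtain ⟨a', rfl⟩ := hsurj x
        obtain ⟨b', rfl⟩ := hsurj y
        exact ⟨a', b', rfl, rfl, le_conJoin_right_s4 hxy⟩)
    exact (push_iff (conJoin_isCon _ _ : A.IsCon _).1 hκ1).mp h2
  · intro h
    refine h (fun a b => B.conJoin s t (e a) (e b))
      (pull_isCon he (conJoin_isCon s t)) ?_ ?_
    · exact fun a b hab => le_conJoin_left_s4 hab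
    · exact fun a b hab => le_conJoin_right_s4 hab

theorem cd_surj {A B : Alg σ} {e : A.carrier → B.carrier} (he : IsHom A B e)
    (hsurj : Function.Surjective e) (hcd : A.CongDistrib) : B.CongDistrib := by
  intro r s t hr hs ht
  funext x y
  apply propext
  obtain ⟨a, rfl⟩ := hsurj x
  obtain ⟨b, rfl⟩ := hsurj y
  have hr' := pull_isCon he hr
  have hs' := pull_isCon he hs
  have ht' := pull_isCon he ht
  constructor
  · rintro ⟨h1, h2⟩
    have key : A.conMeet (fun a b => r (e a) (e b))
        (A.conJoin (fun a b => s (e a) (e b)) (fun a b => t (e a) (e b))) a b :=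
      ⟨h1, (pull_conJoin_iff he hsurj hs ht).mp h2⟩
    rw [hcd _ _ _ hr' hs' ht'] at key
    exact (pull_conJoin_iff he hsurj (conMeet_isCon hr hs) (conMeet_isCon hr ht)).mpr key
  · intro h
    have key : A.conJoin
        (A.conMeet (fun a b => r (e a) (e b)) (fun a b => s (e a) (e b)))
        (A.conMeet (fun a b => r (e a) (e b)) (fun a b => t (e a) (e b))) a b :=
      (pull_conJoin_iff he hsurj (conMeet_isCon hr hs) (conMeet_isCon hr ht)).mp h
    rw [← hcd _ _ _ hr' hs' ht'] at key
    exact ⟨key.1, (pull_conJoin_iff he hsurj hs ht).mpr key.2⟩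

theorem fc_push {A B : Alg σ} {e : A.carrier → B.carrier} (he : IsHom A B e)
    (hsurj : Function.Surjective e) (hcd : A.CongDistrib)
    {ψ : A.carrier → A.carrier → Prop} (hψ : A.IsFC ψ) :
    B.IsFC (push e (A.conJoin ψ (fun a b => e a = e b))) := by
  obtain ⟨hψc, ψs, hψsc, hj, hm, hp⟩ := hψ
  set κ : A.carrier → A.carrier → Prop := fun a b => e a = e b with hκdef
  have hκc : A.IsCon κ := pull_isCon he (delta_isCon B)
  have hκα : ∀ a b, κ a b → A.conJoin ψ κ a b := fun _ _ h => le_conJoin_right_s4 h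
  have hκβ : ∀ a b, κ a b → A.conJoin ψs κ a b := fun _ _ h => le_conJoin_right_s4 h
  have hαc : A.IsCon (A.conJoin ψ κ) := conJoin_isCon _ _
  have hβc : A.IsCon (A.conJoin ψs κ) := conJoin_isCon _ _
  -- meet computation: conMeet (ψ ∨ κ) (ψs ∨ κ) ⊆ κ
  have hmeetκ : ∀ a b, A.conMeet (A.conJoin ψ κ) (A.conJoin ψs κ) a b → κ a b := by
    intro a b hab
    have h1 : A.conMeet (A.conJoin ψ κ) (A.conJoin ψs κ) =
        A.conJoin (A.conMeet (A.conJoin ψ κ) ψs) (A.conMeet (A.conJoin ψ κ) κ) :=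
      hcd _ _ _ hαc hψsc hκc
    rw [h1] at hab
    refine conJoin_le_s4 hκc ?_ (fun a b h => h.2) hab
    -- conMeet (ψ ∨ κ) ψs ⊆ κ
    intro a b h
    have h2 : A.conMeet ψs (A.conJoin ψ κ) =
        A.conJoin (A.conMeet ψs ψ) (A.conMeet ψs κ) := hcd _ _ _ hψsc hψc hκc
    have h3 : A.conMeet ψs (A.conJoin ψ κ) a b := ⟨h.2, h.1⟩
    rw [h2] at h3
    refine conJoin_le_s4 hκc ?_ (fun a b h => h.2) h3
    intro a b h4
    have h5 : A.conMeet ψ ψs a b := ⟨h4.2, h4.1⟩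
    rw [hm] at h5
    exact h5 ▸ hκc.1.refl a
  have hcompn : A.comp ψ ψs = A.nabla := comp_eq_nabla hψc hψsc hj hp
  have hcompn' : A.comp ψs ψ = A.nabla := by rw [← hp]; exact hcompn
  refine ⟨push_isCon he hsurj hαc hκα, push e (A.conJoin ψs κ),
    push_isCon he hsurj hβc hκβ, ?_, ?_, ?_⟩
  · -- join = nabla
    funext x y
    apply propext
    refine ⟨fun _ => trivial, fun _ => ?_⟩
    obtain ⟨a, rfl⟩ := hsurj x
    obtain ⟨b, rfl⟩ := hsurj y
    intro t ht h1 h2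
    have hjab : A.conJoin ψ ψs a b := by rw [hj]; trivial
    exact hjab (fun a b => t (e a) (e b)) (pull_isCon he ht)
      (fun a b h => h1 _ _ ⟨a, b, rfl, rfl, le_conJoin_left_s4 h⟩)
      (fun a b h => h2 _ _ ⟨a, b, rfl, rfl, le_conJoin_left_s4 h⟩)
  · -- meet = delta
    funext x y
    apply propext
    constructor
    · rintro ⟨h1, h2⟩
      obtain ⟨a, b, rfl, rfl, hab⟩ := h1
      have hb : A.conJoin ψs κ a b := (push_iff hβc.1 hκβ).mp h2
      exact hmeetκ a b ⟨hab, hb⟩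
    · rintro rfl
      obtain ⟨a, rfl⟩ := hsurj x
      exact ⟨⟨a, a, rfl, rfl, hαc.1.refl a⟩, ⟨a, a, rfl, rfl, hβc.1.refl a⟩⟩
  · -- comp both ways = nabla
    have c1 : B.comp (push e (A.conJoin ψ κ)) (push e (A.conJoin ψs κ)) = B.nabla := by
      funext x y
      apply propext
      refine ⟨fun _ => trivial, fun _ => ?_⟩
      obtain ⟨a, rfl⟩ := hsurj x
      obtain ⟨b, rfl⟩ := hsurj y
      have : A.comp ψ ψs a b := by rw [hcompn]; trivial
      obtain ⟨c, hac, hcb⟩ := this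
      exact ⟨e c, ⟨a, c, rfl, rfl, le_conJoin_left_s4 hac⟩,
        ⟨c, b, rfl, rfl, le_conJoin_left_s4 hcb⟩⟩
    have c2 : B.comp (push e (A.conJoin ψs κ)) (push e (A.conJoin ψ κ)) = B.nabla := by
      funext x y
      apply propext
      refine ⟨fun _ => trivial, fun _ => ?_⟩
      obtain ⟨a, rfl⟩ := hsurj x
      obtain ⟨b, rfl⟩ := hsurj y
      have : A.comp ψs ψ a b := by rw [hcompn']; trivial
      obtain ⟨c, hac, hcb⟩ := this
      exact ⟨e c, ⟨a, c, rfl, rfl, le_conJoin_left_s4 hac⟩,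
        ⟨c, b, rfl, rfl, le_conJoin_left_s4 hcb⟩⟩
    rw [c1, c2]

theorem fc_pull {C D : Alg σ} {e : C.carrier → D.carrier} (he : IsHom C D e)
    (hsurj : Function.Surjective e) (hinj : Function.Injective e)
    {γ : D.carrier → D.carrier → Prop} (hγ : D.IsFC γ) :
    C.IsFC (fun u v => γ (e u) (e v)) := by
  obtain ⟨hγc, γs, hγsc, hj, hm, hp⟩ := hγ
  have hn : D.comp γ γs = D.nabla := comp_eq_nabla hγc hγsc hj hp
  have hn' : D.comp γs γ = D.nabla := by rw [← hp]; exact hn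
  refine ⟨pull_isCon he hγc, fun u v => γs (e u) (e v), pull_isCon he hγsc, ?_, ?_, ?_⟩
  · funext u v
    apply propext
    refine ⟨fun _ => trivial, fun _ => ?_⟩
    intro t ht h1 h2
    have : D.comp γ γs (e u) (e v) := by rw [hn]; trivial
    obtain ⟨z, h3, h4⟩ := this
    obtain ⟨w, rfl⟩ := hsurj z
    exact ht.1.trans (h2 u w h3) (h1 w v h4)
  · funext u v
    apply propext
    constructor
    · rintro ⟨h1, h2⟩
      have hδ : D.conMeet γ γs (e u) (e v) := ⟨h1, h2⟩
      rw [hm] at hδ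
      exact hinj hδ
    · rintro rfl
      exact ⟨hγc.1.refl _, hγsc.1.refl _⟩
  · have c1 : C.comp (fun u v => γ (e u) (e v)) (fun u v => γs (e u) (e v)) = C.nabla := by
      funext u v
      apply propext
      refine ⟨fun _ => trivial, fun _ => ?_⟩
      have : D.comp γ γs (e u) (e v) := by rw [hn]; trivial
      obtain ⟨z, h3, h4⟩ := this
      obtain ⟨w, rfl⟩ := hsurj z
      exact ⟨w, h3, h4⟩
    have c2 : C.comp (fun u v => γs (e u) (e v)) (fun u v => γ (e u) (e v)) = C.nabla := by
      funext u v
      apply propext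
      refine ⟨fun _ => trivial, fun _ => ?_⟩
      have : D.comp γs γ (e u) (e v) := by rw [hn']; trivial
      obtain ⟨z, h3, h4⟩ := this
      obtain ⟨w, rfl⟩ := hsurj z
      exact ⟨w, h3, h4⟩
    rw [c1, c2]

theorem alg_fclp_surj {A B : Alg σ} {e : A.carrier → B.carrier} (he : IsHom A B e)
    (hsurj : Function.Surjective e) (hcd : A.CongDistrib) (hA : A.AlgFCLP) :
    B.AlgFCLP := by
  intro θ hθ γ hγ
  -- pulled-back congruence
  have hθh : A.IsCon (fun a b => θ (e a) (e b)) := pull_isCon he hθ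
  set θh : A.carrier → A.carrier → Prop := fun a b => θ (e a) (e b) with hθhdef
  -- the induced map between quotients
  set lm : Quot θh → Quot θ :=
    Quot.lift (fun a => Quot.mk θ (e a)) (fun _ _ h => Quot.sound h) with hlmdef
  have hlm_mk : ∀ a : A.carrier, lm (Quot.mk θh a) = Quot.mk θ (e a) := fun _ => rfl
  have hlmsurj : Function.Surjective lm := by
    intro q
    obtain ⟨x, rfl⟩ := mk_surjective θ q
    obtain ⟨a, rfl⟩ := hsurj x
    exact ⟨Quot.mk θh a, rfl⟩
  have hlminj : Function.Injective lm := by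
    intro u v h
    obtain ⟨a, rfl⟩ := mk_surjective θh u
    obtain ⟨b, rfl⟩ := mk_surjective θh v
    rw [hlm_mk, hlm_mk] at h
    exact Quot.sound ((mk_eq_iff hθ.1).mp h)
  have hlm : IsHom (A.quotAlg θh) (B.quotAlg θ) lm := by
    intro f x
    have hx' : x = fun i => Quot.mk θh ((x i).out) :=
      funext fun i => (Quot.out_eq (x i)).symm
    rw [hx', quot_mk_interp hθh, hlm_mk]
    have : (fun i => lm (Quot.mk θh ((x i).out))) =
        fun i => Quot.mk θ (e ((x i).out)) := funext fun i => hlm_mk _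
    rw [this, he, quot_mk_interp hθ]
  -- pull γ back to an FC of A / θh
  have hγ' : (A.quotAlg θh).IsFC (fun u v => γ (lm u) (lm v)) :=
    fc_pull hlm hlmsurj hlminj hγ
  obtain ⟨ψ, hψ, heq⟩ := hA _ hθh _ hγ'
  set κ : A.carrier → A.carrier → Prop := fun a b => e a = e b with hκdef
  have hκθh : ∀ a b, κ a b → θh a b := fun a b h =>
    show θ (e a) (e b) from (h : e a = e b) ▸ hθ.1.refl (e a)
  refine ⟨push e (A.conJoin ψ κ), fc_push he hsurj hcd hψ, ?_⟩
  -- the lifted congruence maps onto γ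
  have hψc : A.IsCon ψ := hψ.1
  have hJ : B.conJoin (push e (A.conJoin ψ κ)) θ = push e (A.conJoin ψ θh) := by
    have hθpush : θ = push e θh := by
      funext x y
      apply propext
      constructor
      · intro h
        obtain ⟨a, rfl⟩ := hsurj x
        obtain ⟨b, rfl⟩ := hsurj y
        exact ⟨a, b, rfl, rfl, h⟩
      · rintro ⟨a, b, rfl, rfl, h⟩
        exact h
    have habs : A.conJoin (A.conJoin ψ κ) θh = A.conJoin ψ θh := by
      funext a b
      apply propext
      constructor
      · intro h
        refine conJoin_le_s4 (conJoin_isCon ψ θh) ?_ (fun a b h => le_conJoin_right_s4 h) h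
        intro a b h
        refine conJoin_le_s4 (conJoin_isCon ψ θh) (fun a b h => le_conJoin_left_s4 h) ?_ h
        exact fun a b h => le_conJoin_right_s4 (hκθh a b h)
      · intro h
        refine conJoin_le_s4 (conJoin_isCon _ _) ?_ (fun a b h => le_conJoin_right_s4 h) h
        exact fun a b h => le_conJoin_left_s4 (le_conJoin_left_s4 h)
    rw [hθpush,
      ← push_conJoin he hsurj (conJoin_isCon ψ κ) hθh
        (fun a b h => le_conJoin_right_s4 h) hκθh, habs]
  funext x y
  apply propext
  obtain ⟨x0, rfl⟩ := mk_surjective θ x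
  obtain ⟨a, rfl⟩ := hsurj x0
  obtain ⟨y0, rfl⟩ := mk_surjective θ y
  obtain ⟨b, rfl⟩ := hsurj y0
  have hJcon : B.IsCon (B.conJoin (push e (A.conJoin ψ κ)) θ) := conJoin_isCon _ _
  have hκjoin : ∀ a b, κ a b → A.conJoin ψ θh a b :=
    fun a b h => le_conJoin_right_s4 (hκθh a b h)
  have step1 : B.quotRel θ (B.conJoin (push e (A.conJoin ψ κ)) θ)
      (Quot.mk θ (e a)) (Quot.mk θ (e b)) ↔ A.conJoin ψ θh a b := by
    rw [quotRel_mk_iff hθ.1 hJcon.1 (fun a b h => le_conJoin_right_s4 h), hJ]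
    exact push_iff (conJoin_isCon ψ θh : A.IsCon _).1 hκjoin
  have step2 : γ (Quot.mk θ (e a)) (Quot.mk θ (e b)) ↔ A.conJoin ψ θh a b := by
    have h1 : γ (Quot.mk θ (e a)) (Quot.mk θ (e b)) =
        γ (lm (Quot.mk θh a)) (lm (Quot.mk θh b)) := rfl
    have h2 : A.quotRel θh (A.conJoin ψ θh) (Quot.mk θh a) (Quot.mk θh b) =
        γ (lm (Quot.mk θh a)) (lm (Quot.mk θh b)) :=
      congrFun (congrFun heq (Quot.mk θh a)) (Quot.mk θh b)
    rw [h1, ← h2]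
    exact quotRel_mk_iff hθh.1 (conJoin_isCon ψ θh : A.IsCon _).1
      (fun a b h => le_conJoin_right_s4 h)
  rw [step1, step2]

end Alg

/-- `A` has FCLP iff all its quotient algebras have FCLP. -/
theorem stmt_4 {σ : Signature} (A : Alg σ) (hne : Nonempty A.carrier)
    (hcd : A.CongDistrib) :
    A.AlgFCLP ↔ ∀ φ, A.IsCon φ → (A.quotAlg φ).AlgFCLP := by
  constructor
  · intro hA φ hφ
    exact Alg.alg_fclp_surj (Alg.mk_isHom hφ) (Alg.mk_surjective φ) hcd hA
  · intro H
    have hδ : A.IsCon A.delta := Alg.delta_isCon A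
    have key : ∀ z : A.carrier, (Quot.mk A.delta z).out = z := fun z =>
      (Alg.mk_eq_iff hδ.1).mp (Quot.out_eq (Quot.mk A.delta z))
    have hout : Alg.IsHom (A.quotAlg A.delta) A Quot.out := by
      intro f x
      exact key _
    have houts : Function.Surjective (Quot.out : Quot A.delta → A.carrier) :=
      fun a => ⟨Quot.mk A.delta a, key a⟩
    exact Alg.alg_fclp_surj hout houts
      (Alg.cd_surj (Alg.mk_isHom hδ) (Alg.mk_surjective A.delta) hcd)
      (H A.delta hδ)
end

section
/- Let A be a congruence-distributive algebra. Then FC(A) satisfies the Chinese Remainder Theorem: for every n ≥ 1, all θ_1, …, θ_n ∈ FC(A) and all a_1, …, a_n ∈ A such that (a_i, a_j) ∈ θ_i ∨ θ_j for all i, j ∈ {1,…,n}, there exists a ∈ A such that (a, a_i) ∈ θ_i for all i ∈ {1,…,n}. -/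
namespace Alg

variable {σ : Signature} {A : Alg σ}

lemma join_con' (r s : A.carrier → A.carrier → Prop) : A.IsCon (A.conJoin r s) := by
  constructor
  · constructor
    · intro a t ht _ _; exact ht.1.refl a
    · intro a b h t ht h1 h2; exact ht.1.symm (h t ht h1 h2)
    · intro a b c hab hbc t ht h1 h2; exact ht.1.trans (hab t ht h1 h2) (hbc t ht h1 h2)
  · intro f x y h t ht h1 h2
    exact ht.2 f x y (fun i => h i t ht h1 h2)

lemma left_le_join' {r s : A.carrier → A.carrier → Prop} {a b : A.carrier} (h : r a b) :
    A.conJoin r s a b := fun _ _ h1 _ => h1 a b h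

lemma right_le_join' {r s : A.carrier → A.carrier → Prop} {a b : A.carrier} (h : s a b) :
    A.conJoin r s a b := fun _ _ _ h2 => h2 a b h

lemma meet_con' {r s : A.carrier → A.carrier → Prop} (hr : A.IsCon r) (hs : A.IsCon s) :
    A.IsCon (A.conMeet r s) := by
  constructor
  · constructor
    · intro a; exact ⟨hr.1.refl a, hs.1.refl a⟩
    · intro a b h; exact ⟨hr.1.symm h.1, hs.1.symm h.2⟩
    · intro a b c h h'; exact ⟨hr.1.trans h.1 h'.1, hs.1.trans h.2 h'.2⟩
  · intro f x y h; exact ⟨hr.2 f x y (fun i => (h i).1), hs.2 f x y fun i => (h i).2⟩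

lemma comp_con' {r s : A.carrier → A.carrier → Prop} (hr : A.IsCon r) (hs : A.IsCon s)
    (hperm : A.comp r s = A.comp s r) : A.IsCon (A.comp r s) := by
  have P : ∀ a b : A.carrier, A.comp r s a b → A.comp s r a b :=
    fun a b h => (congrFun (congrFun hperm a) b).mp h
  have Q : ∀ a b : A.carrier, A.comp s r a b → A.comp r s a b :=
    fun a b h => (congrFun (congrFun hperm a) b).mpr h
  constructor
  · constructor
    · intro a; exact ⟨a, hs.1.refl a, hr.1.refl a⟩
    · rintro a b ⟨x, hx1, hx2⟩
      exact Q b a ⟨x, hr.1.symm hx2, hs.1.symm hx1⟩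
    · rintro a b c ⟨x, hx1, hx2⟩ ⟨y, hy1, hy2⟩
      have hsr : A.comp s r x y := ⟨b, hx2, hy1⟩
      obtain ⟨z, hz1, hz2⟩ := Q x y hsr
      exact ⟨z, hs.1.trans hx1 hz1, hr.1.trans hz2 hy2⟩
  · intro f x y h
    choose w hw1 hw2 using h
    exact ⟨A.interp f w, hs.2 f x w hw1, hr.2 f w y hw2⟩

lemma join_le_comp' {r s : A.carrier → A.carrier → Prop} (hr : A.IsCon r) (hs : A.IsCon s)
    (hperm : A.comp r s = A.comp s r) {a b : A.carrier} (h : A.conJoin r s a b) :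
    A.comp r s a b :=
  h (A.comp r s) (comp_con' hr hs hperm)
    (fun x _ hxy => ⟨x, hs.1.refl x, hxy⟩)
    (fun _ y hxy => ⟨y, hxy, hr.1.refl y⟩)

/-- In a congruence-distributive algebra, a factor congruence "swaps" across
any congruence. -/
lemma fc_swap' (hcd : A.CongDistrib) {θ φ : A.carrier → A.carrier → Prop}
    (hθ : A.IsFC θ) (hφ : A.IsCon φ) :
    ∀ a b c : A.carrier, φ a c → θ c b → ∃ d, θ a d ∧ φ d b := by
  obtain ⟨hθc, ψ, hψc, hjoin, hmeet, hcomp⟩ := hθ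
  intro a b c hac hcb
  have hnab : A.conJoin θ ψ a b := (congrFun (congrFun hjoin a) b).mpr trivial
  have hcompab : A.comp θ ψ a b := join_le_comp' hθc hψc hcomp hnab
  obtain ⟨d, hθad, hψdb⟩ := (congrFun (congrFun hcomp a) b).mp hcompab
  have hj : A.conJoin θ φ d b := fun t ht h1 h2 =>
    ht.1.trans (h1 _ _ (hθc.1.symm hθad))
      (ht.1.trans (h2 _ _ hac) (h1 _ _ hcb))
  have hm : A.conMeet ψ (A.conJoin θ φ) d b := ⟨hψdb, hj⟩
  have e := hcd ψ θ φ hψc hθc hφ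
  have hm2 : A.conJoin (A.conMeet ψ θ) (A.conMeet ψ φ) d b :=
    (congrFun (congrFun e d) b).mp hm
  have hfin : A.conMeet ψ φ d b := hm2 (A.conMeet ψ φ) (meet_con' hψc hφ)
    (fun x y hxy => by
      have hd : A.delta x y := (congrFun (congrFun hmeet x) y).mp ⟨hxy.2, hxy.1⟩
      have hxy' : x = y := hd
      subst hxy'
      exact ⟨hψc.1.refl x, hφ.1.refl x⟩)
    (fun _ _ hxy => hxy)
  exact ⟨d, hθad, hfin.2⟩

/-- Factor congruences permute with every congruence in a CD algebra. -/
lemma fc_comm' (hcd : A.CongDistrib) {θ φ : A.carrier → A.carrier → Prop}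
    (hθ : A.IsFC θ) (hφ : A.IsCon φ) : A.comp θ φ = A.comp φ θ := by
  funext a b
  apply propext
  constructor
  · rintro ⟨c, hac, hcb⟩
    obtain ⟨d, h1, h2⟩ := fc_swap' hcd hθ hφ a b c hac hcb
    exact ⟨d, h1, h2⟩
  · rintro ⟨c, hac, hcb⟩
    obtain ⟨d, h1, h2⟩ := fc_swap' hcd hθ hφ b a c (hφ.1.symm hcb) (hθ.1.1.symm hac)
    exact ⟨d, hφ.1.symm h2, hθ.1.1.symm h1⟩

lemma join_pt' (hcd : A.CongDistrib) {θ φ : A.carrier → A.carrier → Prop}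
    {a b : A.carrier} (hθ : A.IsFC θ) (hφ : A.IsCon φ)
    (h : A.conJoin φ θ a b) : ∃ x, φ a x ∧ θ x b := by
  have hperm := fc_comm' hcd hθ hφ
  have h' : A.conJoin θ φ a b := fun t ht h1 h2 => h t ht h2 h1
  exact join_le_comp' hθ.1 hφ hperm h'

lemma dual_distrib' (hcd : A.CongDistrib) {r s t : A.carrier → A.carrier → Prop}
    (hr : A.IsCon r) (hs : A.IsCon s) (ht : A.IsCon t) {a b : A.carrier}
    (h1 : A.conJoin r t a b) (h2 : A.conJoin s t a b) :
    A.conJoin (A.conMeet r s) t a b := by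
  have e1 := hcd (A.conJoin s t) r t (join_con' _ _) hr ht
  have h3 : A.conJoin (A.conMeet (A.conJoin s t) r) (A.conMeet (A.conJoin s t) t) a b :=
    (congrFun (congrFun e1 a) b).mp ⟨h2, h1⟩
  refine h3 (A.conJoin (A.conMeet r s) t) (join_con' _ _) ?_ ?_
  · intro x y hxy
    have e2 := hcd r s t hr hs ht
    have h4 : A.conJoin (A.conMeet r s) (A.conMeet r t) x y :=
      (congrFun (congrFun e2 x) y).mp ⟨hxy.2, hxy.1⟩
    exact h4 (A.conJoin (A.conMeet r s) t) (join_con' _ _)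
      (fun u v h => left_le_join' h)
      (fun u v h => right_le_join' h.2)
  · intro x y hxy
    exact right_le_join' hxy.2

lemma meet_family_con' {n : ℕ} (φ : Fin n → (A.carrier → A.carrier → Prop))
    (hφ : ∀ i, A.IsCon (φ i)) : A.IsCon (fun u v => ∀ i, φ i u v) := by
  constructor
  · constructor
    · intro a i; exact (hφ i).1.refl a
    · intro a b h i; exact (hφ i).1.symm (h i)
    · intro a b c h h' i; exact (hφ i).1.trans (h i) (h' i)
  · intro f x y h i; exact (hφ i).2 f x y (fun j => h j i)

lemma fin_dual_distrib' (hcd : A.CongDistrib) :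
    ∀ (n : ℕ) (φ : Fin (n+1) → (A.carrier → A.carrier → Prop))
      (t : A.carrier → A.carrier → Prop),
      (∀ i, A.IsCon (φ i)) → A.IsCon t → ∀ a b : A.carrier,
      (∀ i, A.conJoin (φ i) t a b) → A.conJoin (fun u v => ∀ i, φ i u v) t a b := by
  intro n
  induction n with
  | zero =>
    intro φ t hφ ht a b h
    refine fun t' ht' h1 h2 => h 0 t' ht' (fun x y hxy => h1 x y ?_) h2
    intro i
    have h0 : i = 0 := Fin.fin_one_eq_zero i
    rw [h0]; exact hxy
  | succ n ih =>
    intro φ t hφ ht a b h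
    have hM' := ih (fun i => φ i.castSucc) t (fun i => hφ _) ht a b (fun i => h i.castSucc)
    have hlast := h (Fin.last (n+1))
    have hdd := dual_distrib' hcd (meet_family_con' _ (fun i => hφ _))
      (hφ (Fin.last (n+1))) ht hM' hlast
    refine fun t' ht' h1 h2 => hdd t' ht' (fun x y hxy => h1 x y ?_) h2
    intro i
    exact Fin.lastCases hxy.2 (fun j => hxy.1 j) i

lemma crt_aux (hcd : A.CongDistrib) :
    ∀ (n : ℕ) (θ : Fin (n+1) → (A.carrier → A.carrier → Prop))
      (a : Fin (n+1) → A.carrier),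
      (∀ i, A.IsFC (θ i)) → (∀ i j, A.conJoin (θ i) (θ j) (a i) (a j)) →
      ∃ x, ∀ i, θ i x (a i) := by
  intro n
  induction n with
  | zero =>
    intro θ a hfc _
    refine ⟨a 0, fun i => ?_⟩
    have h0 : i = 0 := Fin.fin_one_eq_zero i
    rw [h0]; exact (hfc 0).1.1.refl (a 0)
  | succ n ih =>
    intro θ a hfc hpair
    obtain ⟨y, hy⟩ := ih (fun i => θ i.castSucc) (fun i => a i.castSucc)
      (fun i => hfc _) (fun i j => hpair i.castSucc j.castSucc)
    set L := Fin.last (n+1) with hL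
    have hchain : ∀ i : Fin (n+1), A.conJoin (θ i.castSucc) (θ L) y (a L) :=
      fun i t ht h1 h2 => ht.1.trans (h1 _ _ (hy i)) (hpair i.castSucc L t ht h1 h2)
    have hJ : A.conJoin (fun u v => ∀ i : Fin (n+1), θ i.castSucc u v) (θ L) y (a L) :=
      fin_dual_distrib' hcd n (fun i => θ i.castSucc) (θ L)
        (fun i => (hfc i.castSucc).1) (hfc L).1 y (a L) hchain
    obtain ⟨x, hMx, hxL⟩ := join_pt' hcd (hfc L)
      (meet_family_con' (fun i : Fin (n+1) => θ i.castSucc) (fun i => (hfc i.castSucc).1)) hJ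
    refine ⟨x, fun i => ?_⟩
    exact Fin.lastCases hxL
      (fun j => (hfc j.castSucc).1.1.trans ((hfc j.castSucc).1.1.symm (hMx j)) (hy j)) i

end Alg

/-- `FC(A)` satisfies the Chinese Remainder Theorem in a
congruence-distributive algebra `A`. -/
theorem stmt_12 {σ : Signature} (A : Alg σ) (hne : Nonempty A.carrier)
    (hcd : A.CongDistrib) :
    ∀ n : ℕ, 1 ≤ n →
      ∀ (θ : Fin n → (A.carrier → A.carrier → Prop))
        (a : Fin n → A.carrier),
        (∀ i, A.IsFC (θ i)) →
        (∀ i j, A.conJoin (θ i) (θ j) (a i) (a j)) →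
        ∃ x, ∀ i, θ i x (a i) := by
  intro n hn θ a hfc hpair
  obtain ⟨m, rfl⟩ : ∃ m, n = m + 1 := ⟨n - 1, by omega⟩
  exact Alg.crt_aux hcd m θ a hfc hpair
end
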